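/- For any two points v, w ∈ R^d/R1 lying in distinct open sectors of a tropical hyperplane H_ω, the sum of their tropical distances to H_ω is at most their tropical distance to each other: d_tr(v, H_ω) + d_tr(w, H_ω) ≤ d_tr(v, w). -/

import Mathlib

noncomputable def dtr {d : ℕ} (v w : Fin d → ℝ) : ℝ :=
  (⨆ i, (v i - w i)) - ⨅ i, (v i - w i)

/-- The tropical hyperplane with normal vector `ω`: the max of `ω i + x i` is attained twice. -/
def Hyp {d : ℕ} (ω : Fin d → ℝ) : Set (Fin d → ℝ) :=
  {x | ∃ i j : Fin d, i ≠ j ∧ ω i + x i = ω j + x j ∧ ∀ k, ω k + x k ≤ ω i + x i}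

/-- Tropical distance from a point to the tropical hyperplane `H_ω`. -/
noncomputable def distH {d : ℕ} (x ω : Fin d → ℝ) : ℝ :=
  sInf (dtr x '' Hyp ω)

/-- The second largest entry (with multiplicity) of a vector. -/
noncomputable def smax {d : ℕ} (x : Fin d → ℝ) : ℝ :=
  sSup {r | ∃ i j : Fin d, i ≠ j ∧ r = min (x i) (x j)}

/-- Open sector `S_ω^i` of the tropical hyperplane `H_ω`. -/
def Sector {d : ℕ} (ω : Fin d → ℝ) (i : Fin d) : Set (Fin d → ℝ) :=
  {x | ∀ j, j ≠ i → ω j + x j < ω i + x i}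

/-! The point `v` of the sector `S_ω^i` is moved onto `H_ω` by raising its `j`-th coordinate
until `ω j + v j` ties with the maximum `ω i + v i`; this costs `(ω i + v i) - (ω j + v j)`.
Doing the same for `w ∈ S_ω^j` with the roles of `i` and `j` swapped, the two costs add up to
`(v i - w i) - (v j - w j)`, which is at most `dtr v w`. -/

section Tropical

variable {d : ℕ}

theorem dtr_le_iff [Nonempty (Fin d)] {v w : Fin d → ℝ} {c : ℝ} :
    dtr v w ≤ c ↔ ∀ k l, (v k - w k) - (v l - w l) ≤ c := by
  have bddAbove := Finite.bddAbove_range fun k => v k - w k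
  have bddBelow := Finite.bddBelow_range fun k => v k - w k
  rw [dtr, sub_le_iff_le_add, ciSup_le_iff bddAbove]
  refine forall_congr' fun k => ?_
  rw [← sub_le_iff_le_add', le_ciInf_iff bddBelow]
  exact forall_congr' fun l => sub_le_comm

theorem sub_sub_sub_le_dtr [Nonempty (Fin d)] (v w : Fin d → ℝ) (k l : Fin d) :
    (v k - w k) - (v l - w l) ≤ dtr v w :=
  dtr_le_iff.mp le_rfl k l

theorem dtr_nonneg [Nonempty (Fin d)] (v w : Fin d → ℝ) : 0 ≤ dtr v w := by
  obtain ⟨k⟩ := ‹Nonempty (Fin d)›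
  simpa using sub_sub_sub_le_dtr v w k k

theorem distH_le_dtr_of_mem [Nonempty (Fin d)] (v : Fin d → ℝ) {ω p : Fin d → ℝ}
    (hp : p ∈ Hyp ω) : distH v ω ≤ dtr v p :=
  csInf_le ⟨0, by rintro _ ⟨q, -, rfl⟩; exact dtr_nonneg v q⟩ ⟨p, hp, rfl⟩

theorem add_le_of_mem_Sector {ω x : Fin d → ℝ} {i : Fin d} (hx : x ∈ Sector ω i) (k : Fin d) :
    ω k + x k ≤ ω i + x i := by
  rcases eq_or_ne k i with rfl | hk
  · exact le_rfl
  · exact (hx k hk).le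

theorem update_mem_Hyp {ω x : Fin d → ℝ} {i j : Fin d} (hij : i ≠ j)
    (hmax : ∀ k, ω k + x k ≤ ω i + x i) :
    Function.update x j (ω i + x i - ω j) ∈ Hyp ω := by
  refine ⟨i, j, hij, ?_, fun k => ?_⟩
  · simp only [Function.update_self, Function.update_of_ne hij]
    ring
  · rw [Function.update_of_ne hij]
    rcases eq_or_ne k j with rfl | hkj
    · simp
    · rw [Function.update_of_ne hkj]
      exact hmax k

theorem distH_le_of_forall_le {ω x : Fin d → ℝ} {i j : Fin d} (hij : i ≠ j)
    (hmax : ∀ k, ω k + x k ≤ ω i + x i) :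
    distH x ω ≤ (ω i + x i) - (ω j + x j) := by
  have : Nonempty (Fin d) := ⟨i⟩
  set p := Function.update x j (ω i + x i - ω j)
  have hentry : ∀ k, (ω j + x j) - (ω i + x i) ≤ x k - p k ∧ x k - p k ≤ 0 := by
    intro k
    rcases eq_or_ne k j with rfl | hkj
    · constructor <;> simp only [p, Function.update_self] <;> linarith [hmax k]
    · simp only [p, Function.update_of_ne hkj, sub_self, le_refl, and_true]
      linarith [hmax j]
  refine (distH_le_dtr_of_mem x (update_mem_Hyp hij hmax)).trans (dtr_le_iff.mpr fun k l => ?_)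
  linarith [hentry k, hentry l]

end Tropical

theorem distH_add_distH_le_general {d : ℕ} (ω v w : Fin d → ℝ) (i j : Fin d)
    (hij : i ≠ j) (hv : v ∈ Sector ω i) (hw : w ∈ Sector ω j) :
    distH v ω + distH w ω ≤ dtr v w := by
  have : Nonempty (Fin d) := ⟨i⟩
  have hdv := distH_le_of_forall_le hij (add_le_of_mem_Sector hv)
  have hdw := distH_le_of_forall_le hij.symm (add_le_of_mem_Sector hw)
  linarith [sub_sub_sub_le_dtr v w i j]

/-- If `v` and `w` lie in distinct open sectors of `H_ω`, the sum of their tropical distances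
to `H_ω` is at most their tropical distance to each other. -/
theorem distH_add_distH_le {d : ℕ} (hd : 0 < d) (ω v w : Fin d → ℝ) (i j : Fin d)
    (hij : i ≠ j) (hv : v ∈ Sector ω i) (hw : w ∈ Sector ω j) :
    distH v ω + distH w ω ≤ dtr v w :=
  distH_add_distH_le_general ω v w i j hij hv hw
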